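/- For p, q ∈ ℝ³ set p₀ := √(1 + |p|²), q₀ := √(1 + |q|²) and τ(p,q) := p₀ q₀ − p·q. There exists a constant C > 0 such that for all p ≠ q in ℝ³, one has τ(p,q) > 1 and (τ(p,q) − 1)^{−1/2} ≤ C ( q₀/|p − q| + (q₀/p₀)^{1/2} ). -/

import Mathlib

open MeasureTheory

/-- Relativistic energy `p₀ = √(1 + |p|²)`. -/
noncomputable def pZero (p : EuclideanSpace ℝ (Fin 3)) : ℝ := Real.sqrt (1 + ‖p‖ ^ 2)

/-- `τ(p,q) = p₀ q₀ - p·q`, the Lorentz inner product of the energy-momentum 4-vectors. -/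
noncomputable def tauLor (p q : EuclideanSpace ℝ (Fin 3)) : ℝ :=
  pZero p * pZero q - (inner ℝ p q : ℝ)

/-! The proof rests on the identity
`2 p₀ q₀ (τ - 1) = |p - q|² + (p₀ q₀ - |p||q| - 1)² + 2 (p₀ q₀ - 1)(|p||q| - p·q)`,
whose last two terms are nonnegative, so `|p - q|² ≤ 2 p₀ q₀ (τ - 1)`. This reduces the claim to
`√(p₀ q₀) / |p - q| ≤ q₀ / |p - q| + √(q₀ / p₀)`, which follows from
`p₀ ≤ q₀ + |p - q|`. -/

namespace Real

theorem rpow_neg_one_half_le_sqrt_div_of_sq_le {t r s : ℝ} (ht : 0 < t) (hr : 0 < r)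
    (h : r ^ 2 ≤ s * t) : t ^ (-(1 / 2) : ℝ) ≤ √s / r := by
  have hst : r ≤ √s * √t := by
    rw [← sqrt_mul' _ ht.le]
    exact le_sqrt_of_sq_le h
  rw [rpow_neg ht.le, ← sqrt_eq_rpow, inv_eq_one_div,
    div_le_div_iff₀ (sqrt_pos.2 ht) hr]
  linarith

theorem sqrt_mul_div_le_of_le_add {P Q r : ℝ} (hP : 0 < P) (hQ : 0 ≤ Q) (hr : 0 < r)
    (h : P ≤ Q + r) : √(P * Q) / r ≤ Q / r + √(Q / P) := by
  set s := √(Q / P) with hs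
  have hs0 : 0 ≤ s := sqrt_nonneg _
  have hQs : Q = P * s ^ 2 := by
    rw [hs, sq_sqrt (div_nonneg hQ hP.le)]
    field_simp
  have hPQ : √(P * Q) = P * s := by
    rw [hQs, show P * (P * s ^ 2) = (P * s) ^ 2 by ring, sqrt_sq (by positivity)]
  rw [hPQ, div_add' _ _ _ hr.ne', div_le_div_iff_of_pos_right hr, hQs]
  rw [hQs] at h
  -- `P s ≤ P s² + r s` is clear for `s ≥ 1`; for `s ≤ 1`, `P s (1 - s) ≤ s P (1 - s²) ≤ s r`.
  nlinarith [mul_nonneg hs0 hP.le, mul_nonneg (mul_nonneg hs0 hP.le) hs0]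

end Real

theorem sq_pZero (p : EuclideanSpace ℝ (Fin 3)) : pZero p ^ 2 = 1 + ‖p‖ ^ 2 :=
  Real.sq_sqrt (by positivity)

theorem one_le_pZero (p : EuclideanSpace ℝ (Fin 3)) : 1 ≤ pZero p :=
  Real.one_le_sqrt.2 (by nlinarith [sq_nonneg ‖p‖])

theorem pZero_le_pZero_add_dist (p q : EuclideanSpace ℝ (Fin 3)) :
    pZero p ≤ pZero q + dist p q := by
  have hnorm : ‖p‖ ≤ ‖q‖ + dist p q := by
    rw [dist_eq_norm]
    linarith [norm_sub_norm_le p q]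
  have hq : ‖q‖ ≤ pZero q := Real.le_sqrt_of_sq_le (by linarith)
  refine Real.sqrt_le_iff.2 ⟨by positivity [one_le_pZero q], ?_⟩
  nlinarith [sq_pZero q, norm_nonneg p, norm_nonneg q, dist_nonneg (x := p) (y := q)]

theorem two_mul_pZero_mul_tauLor_sub_one (p q : EuclideanSpace ℝ (Fin 3)) :
    2 * (pZero p * pZero q) * (tauLor p q - 1) =
      dist p q ^ 2 + (pZero p * pZero q - ‖p‖ * ‖q‖ - 1) ^ 2
        + 2 * (pZero p * pZero q - 1) * (‖p‖ * ‖q‖ - inner ℝ p q) := by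
  have hPQ : (pZero p * pZero q) ^ 2 = (1 + ‖p‖ ^ 2) * (1 + ‖q‖ ^ 2) := by
    rw [mul_pow, sq_pZero, sq_pZero]
  rw [tauLor, dist_eq_norm, norm_sub_sq_real]
  linear_combination hPQ

theorem sq_dist_le_two_mul_pZero_mul_tauLor_sub_one (p q : EuclideanSpace ℝ (Fin 3)) :
    dist p q ^ 2 ≤ 2 * (pZero p * pZero q) * (tauLor p q - 1) := by
  have hPQ : 1 ≤ pZero p * pZero q :=
    one_le_mul_of_one_le_of_one_le (one_le_pZero p) (one_le_pZero q)
  have hinner : inner ℝ p q ≤ ‖p‖ * ‖q‖ := real_inner_le_norm p q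
  rw [two_mul_pZero_mul_tauLor_sub_one]
  nlinarith [sq_nonneg (pZero p * pZero q - ‖p‖ * ‖q‖ - 1)]

theorem one_lt_tauLor {p q : EuclideanSpace ℝ (Fin 3)} (h : p ≠ q) : 1 < tauLor p q := by
  have hr : 0 < dist p q ^ 2 := pow_pos (dist_pos.2 h) 2
  have hPQ : 0 < 2 * (pZero p * pZero q) := by positivity [one_le_pZero p, one_le_pZero q]
  have := sq_dist_le_two_mul_pZero_mul_tauLor_sub_one p q
  nlinarith

/-- There is `C > 0` such that for `p ≠ q` one has `τ(p,q) > 1` and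
`(τ(p,q) - 1)^{-1/2} ≤ C (q₀/|p - q| + (q₀/p₀)^{1/2})`. -/
theorem tauLor_inv_sqrt_bound :
    ∃ C : ℝ, 0 < C ∧ ∀ p q : EuclideanSpace ℝ (Fin 3), p ≠ q →
      1 < tauLor p q ∧
      (tauLor p q - 1) ^ (-(1 / 2) : ℝ)
        ≤ C * (pZero q / dist p q + Real.sqrt (pZero q / pZero p)) := by
  refine ⟨√2, by positivity, fun p q hpq => ⟨one_lt_tauLor hpq, ?_⟩⟩
  have hr : 0 < dist p q := dist_pos.2 hpq
  calc (tauLor p q - 1) ^ (-(1 / 2) : ℝ)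
      ≤ √(2 * (pZero p * pZero q)) / dist p q :=
        Real.rpow_neg_one_half_le_sqrt_div_of_sq_le (sub_pos.2 (one_lt_tauLor hpq)) hr
          (sq_dist_le_two_mul_pZero_mul_tauLor_sub_one p q)
    _ = √2 * (√(pZero p * pZero q) / dist p q) := by
        rw [Real.sqrt_mul zero_le_two, mul_div_assoc]
    _ ≤ √2 * (pZero q / dist p q + √(pZero q / pZero p)) := by
        gcongr
        exact Real.sqrt_mul_div_le_of_le_add (by linarith [one_le_pZero p])
          (by linarith [one_le_pZero q]) hr (pZero_le_pZero_add_dist p q)
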